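/- Fix z ∈ ℂ and m, m' ∈ ℂ. Let f : ℝ → ℂ solve −f'' + (p+q)·f = z²·f on ℝ and coincide, together with its first derivative, with θ(·,z) + m·φ(·,z) on [t,∞). Then the Wronskian-type quantity w := f'(0) − m'·f(0) satisfies w = (m − m') − ∫₀ᵗ q(x)·(θ(x,z) + m'·φ(x,z))·f(x) dx. -/

import Mathlib

/-! For solutions `y₁` of `-y'' + p₁ y = z² y` and `y₂` of `-y'' + p₂ y = z² y`, the Wronskian
`W = y₁ y₂' - y₁' y₂` has derivative `(p₂ - p₁) y₁ y₂`; since `y₂'` is only absolutely continuous,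
the integrated form is obtained by integrating by parts against a primitive (via Fubini).
Apply this to `ψ = θ + m'φ` and `f`: `W(ψ, f)(0) = w`, the change of `W` over `[0, t]` is
`∫₀ᵗ q ψ f`, and at `t` the function `f` agrees with `θ + mφ`, whose Wronskian with `ψ` is
constant and equal to `m - m'` at `0`. -/

open MeasureTheory

noncomputable section

/-- `y` together with its x-derivative `y'` solves `-y'' + p·y = z²·y` on `ℝ`,
with `y'` locally absolutely continuous; this is encoded by requiring that `y'`
is everywhere the derivative of `y` and that `y'` is the integral of
`(p - z²)·y` (the equation holding a.e.). -/
def IsSol (p : ℝ → ℝ) (z : ℂ) (y y' : ℝ → ℂ) : Prop :=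
  (∀ x : ℝ, HasDerivAt y (y' x) x) ∧
  (∀ x : ℝ, y' x = y' 0 + ∫ s in (0:ℝ)..x, ((p s : ℂ) - z ^ 2) * y s)

open Set intervalIntegral

section Periodic

variable {E : Type*} {f : ℝ → E} {T : ℝ}

theorem ae_forall_add_zsmul_eq (hper : ∀ᵐ x, f (x + T) = f x) :
    ∀ᵐ x, ∀ n : ℤ, f (x + n • T) = f x := by
  have shift (c : ℝ) : ∀ᵐ x, f (x + c + T) = f (x + c) :=
    (quasiMeasurePreserving_add_right volume c).ae hper
  refine ae_all_iff.2 fun n => ?_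
  induction n using Int.induction_on with
  | zero => simp
  | succ n ih =>
    filter_upwards [ih, shift ((n : ℤ) • T)] with x hn hshift
    rwa [add_zsmul, one_zsmul, ← add_assoc, hshift]
  | pred n ih =>
    filter_upwards [ih, shift ((-n - 1 : ℤ) • T)] with x hn hshift
    rwa [← hshift, add_assoc, ← add_one_zsmul, sub_add_cancel]

theorem intervalIntegrable_of_ae_periodic [NormedAddCommGroup E] (hT : 0 < T)
    (hper : ∀ᵐ x, f (x + T) = f x) (hf : IntegrableOn f (Icc 0 T)) (a b : ℝ) :
    IntervalIntegrable f volume a b := by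
  have hmod : (fun x => f (toIcoMod hT 0 x)) =ᵐ[volume] f := by
    filter_upwards [ae_forall_add_zsmul_eq hper] with x hx
    rw [← self_sub_toIcoDiv_zsmul, sub_eq_add_neg, ← neg_zsmul, hx]
  have hperiodic : Function.Periodic (fun x => f (toIcoMod hT 0 x)) T :=
    fun x => by simp only [toIcoMod_add_right]
  have h0T : IntervalIntegrable f volume 0 T :=
    (intervalIntegrable_iff_integrableOn_Icc_of_le hT.le).2 hf
  exact (hperiodic.intervalIntegrable₀ hT.ne' (h0T.congr_ae (ae_restrict_of_ae hmod.symm)) a b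
    ).congr_ae (ae_restrict_of_ae hmod)

end Periodic

section IntegrationByParts

variable {𝕜 : Type*} [RCLike 𝕜] {a b : ℝ}

theorem integral_mul_primitive_eq_integral_primitive_mul (hab : a ≤ b) {u g : ℝ → 𝕜}
    (hu : IntervalIntegrable u volume a b) (hg : IntervalIntegrable g volume a b) :
    ∫ x in a..b, u x * ∫ s in a..x, g s = ∫ s in a..b, (∫ x in s..b, u x) * g s := by
  set μ := volume.restrict (Ioc a b)
  set F : ℝ × ℝ → 𝕜 := {q : ℝ × ℝ | q.2 ≤ q.1}.indicator fun q => u q.1 * g q.2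
  have hF : Integrable F (μ.prod μ) :=
    (((intervalIntegrable_iff_integrableOn_Ioc_of_le hab).1 hu).mul_prod
      ((intervalIntegrable_iff_integrableOn_Ioc_of_le hab).1 hg)).indicator
      (measurableSet_le measurable_snd measurable_fst)
  have lhs : ∫ x in a..b, u x * ∫ s in a..x, g s = ∫ x, ∫ s, F (x, s) ∂μ ∂μ := by
    rw [integral_of_le hab]
    refine setIntegral_congr_fun measurableSet_Ioc fun x hx => ?_
    have hsection : (fun s => F (x, s)) = (Iic x).indicator fun s => u x * g s := by
      ext s; simp [F, indicator_apply]
    rw [hsection, setIntegral_indicator measurableSet_Iic, Ioc_inter_Iic, min_eq_right hx.2,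
      MeasureTheory.integral_const_mul, integral_of_le hx.1.le]
  have rhs : ∫ s in a..b, (∫ x in s..b, u x) * g s = ∫ s, ∫ x, F (x, s) ∂μ ∂μ := by
    rw [integral_of_le hab]
    refine setIntegral_congr_fun measurableSet_Ioc fun s hs => ?_
    have hsection : (fun x => F (x, s)) = (Ici s).indicator fun x => u x * g s := by
      ext x; simp [F, indicator_apply]
    have hinter : Ioc a b ∩ Ici s = Icc s b := by
      ext x; simp only [mem_inter_iff, mem_Ioc, mem_Ici, mem_Icc]
      constructor
      · rintro ⟨⟨-, hxb⟩, hsx⟩; exact ⟨hsx, hxb⟩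
      · rintro ⟨hsx, hxb⟩; exact ⟨⟨hs.1.trans_le hsx, hxb⟩, hsx⟩
    rw [hsection, setIntegral_indicator measurableSet_Ici, hinter, integral_Icc_eq_integral_Ioc,
      MeasureTheory.integral_mul_const, integral_of_le hs.2]
  rw [lhs, rhs, integral_integral_swap (f := fun x s => F (x, s)) hF]

theorem integral_deriv_mul_eq_sub_of_primitive (hab : a ≤ b) {u u' v g : ℝ → 𝕜}
    (hu : ∀ x ∈ uIcc a b, HasDerivAt u (u' x) x) (hu' : IntervalIntegrable u' volume a b)
    (hv : ∀ x ∈ uIcc a b, v x = v a + ∫ s in a..x, g s) (hg : IntervalIntegrable g volume a b) :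
    ∫ x in a..b, (u' x * v x + u x * g x) = u b * v b - u a * v a := by
  set c := v a
  have hv_int : ∫ x in a..b, (u' x * v x + u x * g x)
      = ∫ x in a..b, (u' x * (c + ∫ s in a..x, g s) + u x * g x) :=
    integral_congr fun x hx => by simp only [hv x hx]
  rw [hv_int, hv b right_mem_uIcc]
  have hu_cont : ContinuousOn u (uIcc a b) := fun x hx =>
    (hu x hx).continuousAt.continuousWithinAt
  have hP : ContinuousOn (fun x => ∫ s in a..x, g s) (uIcc a b) :=
    continuousOn_primitive_interval' hg left_mem_uIcc
  have hFTC : ∀ s ∈ uIcc a b, ∫ x in s..b, u' x = u b - u s := fun s hs =>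
    integral_eq_sub_of_hasDerivAt (fun x hx => hu x (uIcc_subset_uIcc_right hs hx))
      (hu'.mono_set (uIcc_subset_uIcc_right hs))
  have hug : IntervalIntegrable (fun x => u x * g x) volume a b := hg.continuousOn_mul hu_cont
  have hu'P : ∫ x in a..b, u' x * ∫ s in a..x, g s
      = u b * (∫ s in a..b, g s) - ∫ x in a..b, u x * g x := by
    rw [integral_mul_primitive_eq_integral_primitive_mul hab hu' hg,
      ← intervalIntegral.integral_const_mul, ← integral_sub (hg.const_mul _) hug]
    refine integral_congr fun s hs => ?_
    simp only [hFTC s hs, sub_mul]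
  have hsplit : ∀ x, u' x * (c + ∫ s in a..x, g s) + u x * g x
      = u' x * c + (u' x * (∫ s in a..x, g s) + u x * g x) := fun x => by ring
  simp only [hsplit]
  rw [integral_add (hu'.mul_const c) ((hu'.mul_continuousOn hP).add hug),
    integral_add (hu'.mul_continuousOn hP) hug, intervalIntegral.integral_mul_const,
    integral_eq_sub_of_hasDerivAt hu hu', hu'P]
  ring

end IntegrationByParts

def wronskian (y₁ y₁' y₂ y₂' : ℝ → ℂ) (x : ℝ) : ℂ := y₁ x * y₂' x - y₁' x * y₂ x

namespace IsSol

variable {p : ℝ → ℝ} {z : ℂ} {y y' : ℝ → ℂ}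

theorem continuous (h : IsSol p z y y') : Continuous y :=
  continuous_iff_continuousAt.2 fun x => (h.1 x).continuousAt

theorem intervalIntegrable_potential_mul (hp : ∀ a b, IntervalIntegrable p volume a b)
    (h : IsSol p z y y') (a b : ℝ) :
    IntervalIntegrable (fun s => ((p s : ℂ) - z ^ 2) * y s) volume a b := by
  have hp_complex : IntervalIntegrable (fun s => (p s : ℂ)) volume a b :=
    ⟨(hp a b).1.ofReal, (hp a b).2.ofReal⟩
  exact (hp_complex.sub intervalIntegrable_const).mul_continuousOn h.continuous.continuousOn

theorem continuous_deriv (hp : ∀ a b, IntervalIntegrable p volume a b) (h : IsSol p z y y') :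
    Continuous y' := by
  rw [funext h.2]
  exact continuous_const.add (continuous_primitive (h.intervalIntegrable_potential_mul hp) 0)

theorem add_const_mul (hp : ∀ a b, IntervalIntegrable p volume a b) {y₁ y₁' y₂ y₂' : ℝ → ℂ}
    (h₁ : IsSol p z y₁ y₁') (h₂ : IsSol p z y₂ y₂') (c : ℂ) :
    IsSol p z (fun x => y₁ x + c * y₂ x) (fun x => y₁' x + c * y₂' x) := by
  refine ⟨fun x => (h₁.1 x).add ((h₂.1 x).const_mul c), fun x => ?_⟩
  have hsplit : ∀ s, ((p s : ℂ) - z ^ 2) * (y₁ s + c * y₂ s)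
      = ((p s : ℂ) - z ^ 2) * y₁ s + c * (((p s : ℂ) - z ^ 2) * y₂ s) := fun s => by ring
  simp only [hsplit]
  rw [integral_add (h₁.intervalIntegrable_potential_mul hp 0 x)
    ((h₂.intervalIntegrable_potential_mul hp 0 x).const_mul c),
    intervalIntegral.integral_const_mul, h₁.2 x, h₂.2 x]
  ring

theorem wronskian_sub_wronskian_zero {p₁ p₂ : ℝ → ℝ} {y₁ y₁' y₂ y₂' : ℝ → ℂ}
    (hp₁ : ∀ a b, IntervalIntegrable p₁ volume a b) (hp₂ : ∀ a b, IntervalIntegrable p₂ volume a b)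
    (h₁ : IsSol p₁ z y₁ y₁') (h₂ : IsSol p₂ z y₂ y₂') {b : ℝ} (hb : 0 ≤ b) :
    wronskian y₁ y₁' y₂ y₂' b - wronskian y₁ y₁' y₂ y₂' 0
      = ∫ x in 0..b, ((p₂ x : ℂ) - p₁ x) * y₁ x * y₂ x := by
  have hy₁' := h₁.continuous_deriv hp₁
  have hy₂' := h₂.continuous_deriv hp₂
  have hg₁ := h₁.intervalIntegrable_potential_mul hp₁ 0 b
  have hg₂ := h₂.intervalIntegrable_potential_mul hp₂ 0 b
  have parts₁ := integral_deriv_mul_eq_sub_of_primitive hb (fun x _ => h₁.1 x)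
    (hy₁'.intervalIntegrable 0 b) (fun x _ => h₂.2 x) hg₂
  have parts₂ := integral_deriv_mul_eq_sub_of_primitive hb (fun x _ => h₂.1 x)
    (hy₂'.intervalIntegrable 0 b) (fun x _ => h₁.2 x) hg₁
  unfold wronskian
  calc _ = (∫ x in 0..b, (y₁' x * y₂' x + y₁ x * (((p₂ x : ℂ) - z ^ 2) * y₂ x)))
        - ∫ x in 0..b, (y₂' x * y₁' x + y₂ x * (((p₁ x : ℂ) - z ^ 2) * y₁ x)) := by
        rw [parts₁, parts₂]; ring
    _ = ∫ x in 0..b, ((y₁' x * y₂' x + y₁ x * (((p₂ x : ℂ) - z ^ 2) * y₂ x))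
        - (y₂' x * y₁' x + y₂ x * (((p₁ x : ℂ) - z ^ 2) * y₁ x))) :=
      (integral_sub
        (((hy₁'.mul hy₂').intervalIntegrable 0 b).add
          (hg₂.continuousOn_mul h₁.continuous.continuousOn))
        (((hy₂'.mul hy₁').intervalIntegrable 0 b).add
          (hg₁.continuousOn_mul h₂.continuous.continuousOn))).symm
    _ = _ := integral_congr fun x _ => by ring

end IsSol

theorem statement_11_general
    (p q : ℝ → ℝ) (t : ℝ) (ht : 0 < t)
    (hper : ∀ᵐ x ∂(volume : Measure ℝ), p (x + 1) = p x)
    (hpint : IntegrableOn p (Set.Icc 0 1))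
    (hq : Integrable q)
    (z m m' : ℂ)
    (θ φ θD φD : ℝ → ℂ)
    (hθ : IsSol p z θ θD) (hθ0 : θ 0 = 1) (hθD0 : θD 0 = 0)
    (hφ : IsSol p z φ φD) (hφ0 : φ 0 = 0) (hφD0 : φD 0 = 1)
    (f fD : ℝ → ℂ)
    (hf : IsSol (fun x => p x + q x) z f fD)
    (hmatch : ∀ x : ℝ, t ≤ x → f x = θ x + m * φ x ∧ fD x = θD x + m * φD x)
    (w : ℂ) (hw : w = fD 0 - m' * f 0) :
    w = (m - m') - ∫ x in (0:ℝ)..t, (q x : ℂ) * (θ x + m' * φ x) * f x := by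
  have hp := intervalIntegrable_of_ae_periodic one_pos hper hpint
  have hpq : ∀ a b, IntervalIntegrable (fun x => p x + q x) volume a b :=
    fun a b => (hp a b).add hq.intervalIntegrable
  have hψ := hθ.add_const_mul hp hφ m'
  have hψf := hψ.wronskian_sub_wronskian_zero hp hpq hf ht.le
  have hψχ := hψ.wronskian_sub_wronskian_zero hp hp (hθ.add_const_mul hp hφ m) ht.le
  have hq_integral : ∫ x in 0..t, (((p x + q x : ℝ) : ℂ) - p x) * (θ x + m' * φ x) * f x
      = ∫ x in 0..t, (q x : ℂ) * (θ x + m' * φ x) * f x :=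
    integral_congr fun x _ => by push_cast; ring
  obtain ⟨hft, hfDt⟩ := hmatch t le_rfl
  simp only [wronskian, sub_self, zero_mul, intervalIntegral.integral_zero, hft, hfDt,
    hθ0, hθD0, hφ0, hφD0] at hψf hψχ
  rw [hq_integral] at hψf
  rw [hw]
  linear_combination hψχ - hψf

/-- Wronskian identity: if `f` solves `-f''+(p+q)f = z²f` and coincides (with
derivative) with `θ + mφ` on `[t,∞)`, then
`w := f'(0) − m'·f(0) = (m − m') − ∫₀ᵗ q(x)(θ(x)+m'φ(x))f(x)dx`. -/
theorem statement_11
    (p q : ℝ → ℝ) (t : ℝ) (ht : 0 < t)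
    (hper : ∀ᵐ x ∂(volume : Measure ℝ), p (x + 1) = p x)
    (hpint : IntegrableOn p (Set.Icc 0 1))
    (hq : Integrable q) (hqsupp : Function.support q ⊆ Set.Icc 0 t)
    (z m m' : ℂ)
    (θ φ θD φD : ℝ → ℂ)
    (hθ : IsSol p z θ θD) (hθ0 : θ 0 = 1) (hθD0 : θD 0 = 0)
    (hφ : IsSol p z φ φD) (hφ0 : φ 0 = 0) (hφD0 : φD 0 = 1)
    (f fD : ℝ → ℂ)
    (hf : IsSol (fun x => p x + q x) z f fD)
    (hmatch : ∀ x : ℝ, t ≤ x → f x = θ x + m * φ x ∧ fD x = θD x + m * φD x)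
    (w : ℂ) (hw : w = fD 0 - m' * f 0) :
    w = (m - m') - ∫ x in (0:ℝ)..t, (q x : ℂ) * (θ x + m' * φ x) * f x :=
  statement_11_general p q t ht hper hpint hq z m m' θ φ θD φD hθ hθ0 hθD0 hφ hφ0 hφD0 f fD hf
    hmatch w hw
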